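/- For a smooth time-dependent vector field u on 𝕋², the 2D vorticity satisfies the identity ∇⊥(∇⊥·∂_t u) + div(u ⊗ ∇⊥(∇⊥·u)) = ∇⊥(∇⊥·u̇) − div((∇⊥·u)(∇⊥⊗u)), where u̇ = ∂_t u + u·∇u, ∇⊥·u = ∂₁u₂ − ∂₂u₁, and ∇⊥⊗u = (−∂₂u, ∂₁u). -/

import Mathlib

open MeasureTheory Real

noncomputable section

/-- partial derivative in the first coordinate -/
def pd1 (f : ℝ × ℝ → ℝ) (x : ℝ × ℝ) : ℝ := deriv (fun s => f (s, x.2)) x.1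
/-- partial derivative in the second coordinate -/
def pd2 (f : ℝ × ℝ → ℝ) (x : ℝ × ℝ) : ℝ := deriv (fun s => f (x.1, s)) x.2
/-- time derivative of a time-dependent scalar field -/
def pdt (f : ℝ → ℝ × ℝ → ℝ) (t : ℝ) (x : ℝ × ℝ) : ℝ := deriv (fun s => f s x) t

/-- `f` is 1-periodic in both variables (i.e. a function on the torus `𝕋² = ℝ²/ℤ²`). -/
def PerZ (f : ℝ × ℝ → ℝ) : Prop :=
  ∀ x : ℝ × ℝ, f (x.1 + 1, x.2) = f x ∧ f (x.1, x.2 + 1) = f x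

def PerV (u : ℝ × ℝ → ℝ × ℝ) : Prop :=
  PerZ (fun x => (u x).1) ∧ PerZ (fun x => (u x).2)

/-- the measure of a fundamental domain of the torus -/
def Tm : Measure (ℝ × ℝ) := volume.restrict (Set.Ioc (0:ℝ) 1 ×ˢ Set.Ioc (0:ℝ) 1)

/-- `L^p` norm on the torus, `p` finite -/
def LpN (p : ℝ) (f : ℝ × ℝ → ℝ) : ℝ := (eLpNorm f (ENNReal.ofReal p) Tm).toReal
/-- `L^∞` norm on the torus -/
def LinfN (f : ℝ × ℝ → ℝ) : ℝ := (eLpNorm f ⊤ Tm).toReal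

/-- divergence of a (static) vector field -/
def divS (u : ℝ × ℝ → ℝ × ℝ) (x : ℝ × ℝ) : ℝ :=
  pd1 (fun y => (u y).1) x + pd2 (fun y => (u y).2) x
/-- 2D curl `∇⊥·u = ∂₁u₂ - ∂₂u₁` of a (static) vector field -/
def curlS (u : ℝ × ℝ → ℝ × ℝ) (x : ℝ × ℝ) : ℝ :=
  pd1 (fun y => (u y).2) x - pd2 (fun y => (u y).1) x
/-- divergence of a time-dependent vector field -/
def divF (u : ℝ → ℝ × ℝ → ℝ × ℝ) (t : ℝ) (x : ℝ × ℝ) : ℝ := divS (u t) x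
/-- 2D curl of a time-dependent vector field -/
def curlF (u : ℝ → ℝ × ℝ → ℝ × ℝ) (t : ℝ) (x : ℝ × ℝ) : ℝ := curlS (u t) x

/-- the material derivative `u̇ = ∂ₜu + (u·∇)u` of a vector field -/
def mdv (u : ℝ → ℝ × ℝ → ℝ × ℝ) (t : ℝ) (x : ℝ × ℝ) : ℝ × ℝ :=
  (pdt (fun s y => (u s y).1) t x + (u t x).1 * pd1 (fun y => (u t y).1) x
      + (u t x).2 * pd2 (fun y => (u t y).1) x,
   pdt (fun s y => (u s y).2) t x + (u t x).1 * pd1 (fun y => (u t y).2) x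
      + (u t x).2 * pd2 (fun y => (u t y).2) x)

/-- the material derivative `D_t g = ∂ₜ g + u·∇g` of a scalar field -/
def mds (u : ℝ → ℝ × ℝ → ℝ × ℝ) (g : ℝ → ℝ × ℝ → ℝ) (t : ℝ) (x : ℝ × ℝ) : ℝ :=
  pdt g t x + (u t x).1 * pd1 (g t) x + (u t x).2 * pd2 (g t) x

/-- `∑ᵢ ∂ᵢu · ∇uᵢ = ∑_{i,j} ∂ᵢuⱼ ∂ⱼuᵢ` -/
def sumTermS (u : ℝ × ℝ → ℝ × ℝ) (x : ℝ × ℝ) : ℝ :=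
  (pd1 (fun y => (u y).1) x * pd1 (fun y => (u y).1) x
    + pd1 (fun y => (u y).2) x * pd2 (fun y => (u y).1) x)
  + (pd2 (fun y => (u y).1) x * pd1 (fun y => (u y).2) x
    + pd2 (fun y => (u y).2) x * pd2 (fun y => (u y).2) x)

/-- pointwise magnitude of the gradient of a scalar field -/
def gradMag (f : ℝ × ℝ → ℝ) (x : ℝ × ℝ) : ℝ :=
  Real.sqrt ((pd1 f x) ^ 2 + (pd2 f x) ^ 2)

/-- pointwise (Frobenius) magnitude of the gradient of a vector field -/
def gradMagS (u : ℝ × ℝ → ℝ × ℝ) (x : ℝ × ℝ) : ℝ :=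
  Real.sqrt ((pd1 (fun y => (u y).1) x) ^ 2 + (pd2 (fun y => (u y).1) x) ^ 2
    + (pd1 (fun y => (u y).2) x) ^ 2 + (pd2 (fun y => (u y).2) x) ^ 2)

/-- pointwise magnitude of the second derivatives of a vector field -/
def hessMagS (u : ℝ × ℝ → ℝ × ℝ) (x : ℝ × ℝ) : ℝ :=
  Real.sqrt ((pd1 (pd1 (fun y => (u y).1)) x) ^ 2 + (pd1 (pd2 (fun y => (u y).1)) x) ^ 2
    + (pd2 (pd1 (fun y => (u y).1)) x) ^ 2 + (pd2 (pd2 (fun y => (u y).1)) x) ^ 2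
    + (pd1 (pd1 (fun y => (u y).2)) x) ^ 2 + (pd1 (pd2 (fun y => (u y).2)) x) ^ 2
    + (pd2 (pd1 (fun y => (u y).2)) x) ^ 2 + (pd2 (pd2 (fun y => (u y).2)) x) ^ 2)

/-- pointwise Euclidean norm of an `ℝ²`-valued field -/
def vecMag (u : ℝ × ℝ → ℝ × ℝ) (x : ℝ × ℝ) : ℝ :=
  Real.sqrt ((u x).1 ^ 2 + (u x).2 ^ 2)

/-- `W^{k,p}` norm of a scalar field on the torus -/
def Wnorm (k : ℕ) (p : ℝ) (f : ℝ × ℝ → ℝ) : ℝ :=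
  ∑ i ∈ Finset.range (k + 1),
    (eLpNorm (fun x => ‖iteratedFDeriv ℝ i f x‖) (ENNReal.ofReal p) Tm).toReal

end



noncomputable section

def pDv (v : ℝ × ℝ × ℝ) (F : ℝ × ℝ × ℝ → ℝ) : ℝ × ℝ × ℝ → ℝ := fun p => fderiv ℝ F p v

def pvT : ℝ × ℝ × ℝ := (1,0,0)
def pvX : ℝ × ℝ × ℝ := (0,1,0)
def pvY : ℝ × ℝ × ℝ := (0,0,1)

def pA (u : ℝ → ℝ × ℝ → ℝ × ℝ) : ℝ × ℝ × ℝ → ℝ := fun p => (u p.1 p.2).1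
def pB (u : ℝ → ℝ × ℝ → ℝ × ℝ) : ℝ × ℝ × ℝ → ℝ := fun p => (u p.1 p.2).2
def pW (u : ℝ → ℝ × ℝ → ℝ × ℝ) : ℝ × ℝ × ℝ → ℝ :=
  fun p => pDv pvX (pB u) p - pDv pvY (pA u) p
def pM1 (u : ℝ → ℝ × ℝ → ℝ × ℝ) : ℝ × ℝ × ℝ → ℝ :=
  fun p => pDv pvT (pA u) p + pA u p * pDv pvX (pA u) p + pB u p * pDv pvY (pA u) p
def pM2 (u : ℝ → ℝ × ℝ → ℝ × ℝ) : ℝ × ℝ × ℝ → ℝ :=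
  fun p => pDv pvT (pB u) p + pA u p * pDv pvX (pB u) p + pB u p * pDv pvY (pB u) p

theorem pDv_contDiff {n m : WithTop ℕ∞} (v : ℝ × ℝ × ℝ) {F : ℝ × ℝ × ℝ → ℝ}
    (hF : ContDiff ℝ n F) (h : m + 1 ≤ n) : ContDiff ℝ m (pDv v F) :=
  (hF.fderiv_right h).clm_apply contDiff_const

theorem pDv_add (v : ℝ × ℝ × ℝ) {F G : ℝ × ℝ × ℝ → ℝ}
    (hF : Differentiable ℝ F) (hG : Differentiable ℝ G) :
    pDv v (fun p => F p + G p) = fun p => pDv v F p + pDv v G p := by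
  funext p; simp [pDv, fderiv_fun_add (hF p) (hG p)]

theorem pDv_sub (v : ℝ × ℝ × ℝ) {F G : ℝ × ℝ × ℝ → ℝ}
    (hF : Differentiable ℝ F) (hG : Differentiable ℝ G) :
    pDv v (fun p => F p - G p) = fun p => pDv v F p - pDv v G p := by
  funext p; simp [pDv, fderiv_fun_sub (hF p) (hG p)]

theorem pDv_neg (v : ℝ × ℝ × ℝ) (F : ℝ × ℝ × ℝ → ℝ) :
    pDv v (fun p => -F p) = fun p => -pDv v F p := by
  funext p; simp [pDv, fderiv_neg]

theorem pDv_mul (v : ℝ × ℝ × ℝ) {F G : ℝ × ℝ × ℝ → ℝ}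
    (hF : Differentiable ℝ F) (hG : Differentiable ℝ G) :
    pDv v (fun p => F p * G p) = fun p => pDv v F p * G p + F p * pDv v G p := by
  funext p
  simp only [pDv, fderiv_fun_mul (hF p) (hG p), ContinuousLinearMap.add_apply,
    ContinuousLinearMap.smul_apply, smul_eq_mul]
  ring

theorem pDv_swap (v w : ℝ × ℝ × ℝ) {F : ℝ × ℝ × ℝ → ℝ} (hF : ContDiff ℝ 2 F) :
    pDv v (pDv w F) = pDv w (pDv v F) := by
  have hd : Differentiable ℝ F := hF.differentiable two_ne_zero
  have hd' : Differentiable ℝ (fderiv ℝ F) :=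
    (hF.fderiv_right (show (1:WithTop ℕ∞) + 1 ≤ 2 by norm_num)).differentiable one_ne_zero
  funext p
  have h1 : ∀ z w' : ℝ × ℝ × ℝ, pDv z (pDv w' F) p = fderiv ℝ (fderiv ℝ F) p z w' := by
    intro z w'
    show fderiv ℝ (fun q => fderiv ℝ F q w') p z = _
    rw [fderiv_clm_apply (hd' p) (differentiableAt_const w')]
    simp
  rw [h1, h1]
  exact second_derivative_symmetric (fun y => (hd y).hasFDerivAt) (hd' p).hasFDerivAt v w

theorem pd1_slice {F : ℝ × ℝ × ℝ → ℝ} (hF : Differentiable ℝ F) (t : ℝ) (x : ℝ × ℝ) :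
    pd1 (fun y => F (t, y)) x = pDv pvX F (t, x) := by
  have h : HasDerivAt (fun s : ℝ => ((t, s, x.2) : ℝ × ℝ × ℝ)) pvX x.1 :=
    HasDerivAt.prodMk (hasDerivAt_const x.1 t) (HasDerivAt.prodMk (hasDerivAt_id x.1) (hasDerivAt_const x.1 x.2))
  exact ((hF (t, x)).hasFDerivAt.comp_hasDerivAt x.1 h).deriv

theorem pd2_slice {F : ℝ × ℝ × ℝ → ℝ} (hF : Differentiable ℝ F) (t : ℝ) (x : ℝ × ℝ) :
    pd2 (fun y => F (t, y)) x = pDv pvY F (t, x) := by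
  have h : HasDerivAt (fun s : ℝ => ((t, x.1, s) : ℝ × ℝ × ℝ)) pvY x.2 :=
    HasDerivAt.prodMk (hasDerivAt_const x.2 t) (HasDerivAt.prodMk (hasDerivAt_const x.2 x.1) (hasDerivAt_id x.2))
  exact ((hF (t, x)).hasFDerivAt.comp_hasDerivAt x.2 h).deriv

theorem pdt_slice {F : ℝ × ℝ × ℝ → ℝ} (hF : Differentiable ℝ F) (t : ℝ) (x : ℝ × ℝ) :
    pdt (fun s y => F (s, y)) t x = pDv pvT F (t, x) := by
  have h : HasDerivAt (fun s : ℝ => ((s, x) : ℝ × ℝ × ℝ)) pvT t :=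
    HasDerivAt.prodMk (hasDerivAt_id t) (hasDerivAt_const t x)
  exact ((hF (t, x)).hasFDerivAt.comp_hasDerivAt t h).deriv

end
/-- the 2D vorticity identity
`∇⊥(∇⊥·∂ₜu) + div(u ⊗ ∇⊥(∇⊥·u)) = ∇⊥(∇⊥·u̇) − div((∇⊥·u)(∇⊥⊗u))`, componentwise,
where `∇⊥ = (−∂₂, ∂₁)`, `ω = ∇⊥·u = ∂₁u₂ − ∂₂u₁` and `u̇ = ∂ₜu + u·∇u`. -/
theorem stmt4 (u : ℝ → ℝ × ℝ → ℝ × ℝ)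
    (hu : ContDiff ℝ 3 (fun p : ℝ × (ℝ × ℝ) => u p.1 p.2))
    (hper : ∀ t, PerV (u t)) :
    ∀ (t : ℝ) (x : ℝ × ℝ),
      (-(pd2 (fun y => pd1 (fun z => pdt (fun s w => (u s w).2) t z) y
                - pd2 (fun z => pdt (fun s w => (u s w).1) t z) y) x)
          + (pd1 (fun y => (u t y).1 * (-(pd2 (curlF u t) y))) x
             + pd2 (fun y => (u t y).2 * (-(pd2 (curlF u t) y))) x)
        = -(pd2 (fun y => curlS (mdv u t) y) x)
          + (pd1 (fun y => curlF u t y * pd2 (fun z => (u t z).1) y) x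
             + pd2 (fun y => curlF u t y * pd2 (fun z => (u t z).2) y) x))
      ∧ (pd1 (fun y => pd1 (fun z => pdt (fun s w => (u s w).2) t z) y
                - pd2 (fun z => pdt (fun s w => (u s w).1) t z) y) x
          + (pd1 (fun y => (u t y).1 * pd1 (curlF u t) y) x
             + pd2 (fun y => (u t y).2 * pd1 (curlF u t) y) x)
        = pd1 (fun y => curlS (mdv u t) y) x
          - (pd1 (fun y => curlF u t y * pd1 (fun z => (u t z).1) y) x
             + pd2 (fun y => curlF u t y * pd1 (fun z => (u t z).2) y) x)) := by
  intro t x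
  have hA3 : ContDiff ℝ 3 (pA u) := hu.fst
  have hB3 : ContDiff ℝ 3 (pB u) := hu.snd
  have hA2 : ∀ v, ContDiff ℝ 2 (pDv v (pA u)) := fun v => pDv_contDiff v hA3 (by norm_num)
  have hB2 : ∀ v, ContDiff ℝ 2 (pDv v (pB u)) := fun v => pDv_contDiff v hB3 (by norm_num)
  have hA1 : ∀ v w, ContDiff ℝ 1 (pDv v (pDv w (pA u))) := fun v w => pDv_contDiff v (hA2 w) (by norm_num)
  have hB1 : ∀ v w, ContDiff ℝ 1 (pDv v (pDv w (pB u))) := fun v w => pDv_contDiff v (hB2 w) (by norm_num)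
  have dA : Differentiable ℝ (pA u) := hA3.differentiable (by norm_num)
  have dB : Differentiable ℝ (pB u) := hB3.differentiable (by norm_num)
  have dAT : Differentiable ℝ (pDv pvT (pA u)) := (hA2 pvT).differentiable two_ne_zero
  have dAX : Differentiable ℝ (pDv pvX (pA u)) := (hA2 pvX).differentiable two_ne_zero
  have dAY : Differentiable ℝ (pDv pvY (pA u)) := (hA2 pvY).differentiable two_ne_zero
  have dBT : Differentiable ℝ (pDv pvT (pB u)) := (hB2 pvT).differentiable two_ne_zero
  have dBX : Differentiable ℝ (pDv pvX (pB u)) := (hB2 pvX).differentiable two_ne_zero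
  have dBY : Differentiable ℝ (pDv pvY (pB u)) := (hB2 pvY).differentiable two_ne_zero
  have dATT : Differentiable ℝ (pDv pvT (pDv pvT (pA u))) := (hA1 pvT pvT).differentiable one_ne_zero
  have dATX : Differentiable ℝ (pDv pvT (pDv pvX (pA u))) := (hA1 pvT pvX).differentiable one_ne_zero
  have dATY : Differentiable ℝ (pDv pvT (pDv pvY (pA u))) := (hA1 pvT pvY).differentiable one_ne_zero
  have dAXT : Differentiable ℝ (pDv pvX (pDv pvT (pA u))) := (hA1 pvX pvT).differentiable one_ne_zero
  have dAXX : Differentiable ℝ (pDv pvX (pDv pvX (pA u))) := (hA1 pvX pvX).differentiable one_ne_zero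
  have dAXY : Differentiable ℝ (pDv pvX (pDv pvY (pA u))) := (hA1 pvX pvY).differentiable one_ne_zero
  have dAYT : Differentiable ℝ (pDv pvY (pDv pvT (pA u))) := (hA1 pvY pvT).differentiable one_ne_zero
  have dAYX : Differentiable ℝ (pDv pvY (pDv pvX (pA u))) := (hA1 pvY pvX).differentiable one_ne_zero
  have dAYY : Differentiable ℝ (pDv pvY (pDv pvY (pA u))) := (hA1 pvY pvY).differentiable one_ne_zero
  have dBTT : Differentiable ℝ (pDv pvT (pDv pvT (pB u))) := (hB1 pvT pvT).differentiable one_ne_zero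
  have dBTX : Differentiable ℝ (pDv pvT (pDv pvX (pB u))) := (hB1 pvT pvX).differentiable one_ne_zero
  have dBTY : Differentiable ℝ (pDv pvT (pDv pvY (pB u))) := (hB1 pvT pvY).differentiable one_ne_zero
  have dBXT : Differentiable ℝ (pDv pvX (pDv pvT (pB u))) := (hB1 pvX pvT).differentiable one_ne_zero
  have dBXX : Differentiable ℝ (pDv pvX (pDv pvX (pB u))) := (hB1 pvX pvX).differentiable one_ne_zero
  have dBXY : Differentiable ℝ (pDv pvX (pDv pvY (pB u))) := (hB1 pvX pvY).differentiable one_ne_zero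
  have dBYT : Differentiable ℝ (pDv pvY (pDv pvT (pB u))) := (hB1 pvY pvT).differentiable one_ne_zero
  have dBYX : Differentiable ℝ (pDv pvY (pDv pvX (pB u))) := (hB1 pvY pvX).differentiable one_ne_zero
  have dBYY : Differentiable ℝ (pDv pvY (pDv pvY (pB u))) := (hB1 pvY pvY).differentiable one_ne_zero
  have hW2 : ContDiff ℝ 2 (pW u) := (hB2 pvX).sub (hA2 pvY)
  have dW : Differentiable ℝ (pW u) := hW2.differentiable two_ne_zero
  have dW1 : ∀ v, Differentiable ℝ (pDv v (pW u)) := fun v => (pDv_contDiff v hW2 (by norm_num)).differentiable one_ne_zero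
  have hM1C : ContDiff ℝ 2 (pM1 u) := ((hA2 pvT).add ((hA3.of_le (by norm_num)).mul (hA2 pvX))).add ((hB3.of_le (by norm_num)).mul (hA2 pvY))
  have hM2C : ContDiff ℝ 2 (pM2 u) := ((hB2 pvT).add ((hA3.of_le (by norm_num)).mul (hB2 pvX))).add ((hB3.of_le (by norm_num)).mul (hB2 pvY))
  have dM1 : Differentiable ℝ (pM1 u) := hM1C.differentiable two_ne_zero
  have dM2 : Differentiable ℝ (pM2 u) := hM2C.differentiable two_ne_zero
  have dM11 : ∀ v, Differentiable ℝ (pDv v (pM1 u)) := fun v => (pDv_contDiff v hM1C (by norm_num)).differentiable one_ne_zero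
  have dM21 : ∀ v, Differentiable ℝ (pDv v (pM2 u)) := fun v => (pDv_contDiff v hM2C (by norm_num)).differentiable one_ne_zero
  have vA : ∀ (s : ℝ) (z : ℝ × ℝ), (u s z).1 = pA u (s, z) := fun _ _ => rfl
  have vB : ∀ (s : ℝ) (z : ℝ × ℝ), (u s z).2 = pB u (s, z) := fun _ _ => rfl
  have hcurlfun : ∀ s : ℝ, curlF u s = fun z => pW u (s, z) := by
    intro s; funext z
    show pd1 (fun w => (u s w).2) z - pd2 (fun w => (u s w).1) z = _
    rw [show (fun w => (u s w).2) = fun w => pB u (s, w) from rfl,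
        show (fun w => (u s w).1) = fun w => pA u (s, w) from rfl,
        pd1_slice dB, pd2_slice dA]
    rfl
  have hcurlval : ∀ (s : ℝ) (z : ℝ × ℝ), curlF u s z = pW u (s, z) := fun s z => by rw [hcurlfun s]
  have hcurlpd1 : ∀ (s : ℝ) (z : ℝ × ℝ), pd1 (curlF u s) z = pDv pvX (pW u) (s, z) := fun s z => by rw [hcurlfun s]; exact pd1_slice dW s z
  have hcurlpd2 : ∀ (s : ℝ) (z : ℝ × ℝ), pd2 (curlF u s) z = pDv pvY (pW u) (s, z) := fun s z => by rw [hcurlfun s]; exact pd2_slice dW s z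
  have sM1 : ∀ (s : ℝ) (z : ℝ × ℝ), pd2 (fun w => pDv pvT (pA u) (s, w) + pA u (s, w) * pDv pvX (pA u) (s, w) + pB u (s, w) * pDv pvY (pA u) (s, w)) z = pDv pvY (pM1 u) (s, z) := fun s z => pd2_slice dM1 s z
  have sM2 : ∀ (s : ℝ) (z : ℝ × ℝ), pd1 (fun w => pDv pvT (pB u) (s, w) + pA u (s, w) * pDv pvX (pB u) (s, w) + pB u (s, w) * pDv pvY (pB u) (s, w)) z = pDv pvX (pM2 u) (s, z) := fun s z => pd1_slice dM2 s z
  have c1 : ∀ (s : ℝ) (z : ℝ × ℝ), pd2 (fun y => pDv pvX (pDv pvT (pB u)) (s, y) - pDv pvY (pDv pvT (pA u)) (s, y)) z = pDv pvY (fun p => pDv pvX (pDv pvT (pB u)) p - pDv pvY (pDv pvT (pA u)) p) (s, z) := fun s z => pd2_slice (dBXT.sub dAYT) s z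
  have c2 : ∀ (s : ℝ) (z : ℝ × ℝ), pd1 (fun y => pDv pvX (pDv pvT (pB u)) (s, y) - pDv pvY (pDv pvT (pA u)) (s, y)) z = pDv pvX (fun p => pDv pvX (pDv pvT (pB u)) p - pDv pvY (pDv pvT (pA u)) p) (s, z) := fun s z => pd1_slice (dBXT.sub dAYT) s z
  have c3 : ∀ (s : ℝ) (z : ℝ × ℝ), pd1 (fun y => pA u (s, y) * -pDv pvY (pW u) (s, y)) z = pDv pvX (fun p => pA u p * -pDv pvY (pW u) p) (s, z) := fun s z => pd1_slice (dA.mul (dW1 pvY).neg) s z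
  have c4 : ∀ (s : ℝ) (z : ℝ × ℝ), pd2 (fun y => pB u (s, y) * -pDv pvY (pW u) (s, y)) z = pDv pvY (fun p => pB u p * -pDv pvY (pW u) p) (s, z) := fun s z => pd2_slice (dB.mul (dW1 pvY).neg) s z
  have c5 : ∀ (s : ℝ) (z : ℝ × ℝ), pd1 (fun y => pW u (s, y) * pDv pvY (pA u) (s, y)) z = pDv pvX (fun p => pW u p * pDv pvY (pA u) p) (s, z) := fun s z => pd1_slice (dW.mul dAY) s z
  have c6 : ∀ (s : ℝ) (z : ℝ × ℝ), pd2 (fun y => pW u (s, y) * pDv pvY (pB u) (s, y)) z = pDv pvY (fun p => pW u p * pDv pvY (pB u) p) (s, z) := fun s z => pd2_slice (dW.mul dBY) s z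
  have c7 : ∀ (s : ℝ) (z : ℝ × ℝ), pd1 (fun y => pA u (s, y) * pDv pvX (pW u) (s, y)) z = pDv pvX (fun p => pA u p * pDv pvX (pW u) p) (s, z) := fun s z => pd1_slice (dA.mul (dW1 pvX)) s z
  have c8 : ∀ (s : ℝ) (z : ℝ × ℝ), pd2 (fun y => pB u (s, y) * pDv pvX (pW u) (s, y)) z = pDv pvY (fun p => pB u p * pDv pvX (pW u) p) (s, z) := fun s z => pd2_slice (dB.mul (dW1 pvX)) s z
  have c9 : ∀ (s : ℝ) (z : ℝ × ℝ), pd1 (fun y => pW u (s, y) * pDv pvX (pA u) (s, y)) z = pDv pvX (fun p => pW u p * pDv pvX (pA u) p) (s, z) := fun s z => pd1_slice (dW.mul dAX) s z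
  have c10 : ∀ (s : ℝ) (z : ℝ × ℝ), pd2 (fun y => pW u (s, y) * pDv pvX (pB u) (s, y)) z = pDv pvY (fun p => pW u p * pDv pvX (pB u) p) (s, z) := fun s z => pd2_slice (dW.mul dBX) s z
  have cC1 : ∀ (s : ℝ) (z : ℝ × ℝ), pd1 (fun y => pDv pvX (pM2 u) (s, y) - pDv pvY (pM1 u) (s, y)) z = pDv pvX (fun p => pDv pvX (pM2 u) p - pDv pvY (pM1 u) p) (s, z) := fun s z => pd1_slice ((dM21 pvX).sub (dM11 pvY)) s z
  have cC2 : ∀ (s : ℝ) (z : ℝ × ℝ), pd2 (fun y => pDv pvX (pM2 u) (s, y) - pDv pvY (pM1 u) (s, y)) z = pDv pvY (fun p => pDv pvX (pM2 u) p - pDv pvY (pM1 u) p) (s, z) := fun s z => pd2_slice ((dM21 pvX).sub (dM11 pvY)) s z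
  have swXTA0 : pDv pvX (pDv pvT (pA u)) = pDv pvT (pDv pvX (pA u)) := pDv_swap pvX pvT (hA3.of_le (by norm_num))
  have swYTA0 : pDv pvY (pDv pvT (pA u)) = pDv pvT (pDv pvY (pA u)) := pDv_swap pvY pvT (hA3.of_le (by norm_num))
  have swYXA0 : pDv pvY (pDv pvX (pA u)) = pDv pvX (pDv pvY (pA u)) := pDv_swap pvY pvX (hA3.of_le (by norm_num))
  have swXTB0 : pDv pvX (pDv pvT (pB u)) = pDv pvT (pDv pvX (pB u)) := pDv_swap pvX pvT (hB3.of_le (by norm_num))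
  have swYTB0 : pDv pvY (pDv pvT (pB u)) = pDv pvT (pDv pvY (pB u)) := pDv_swap pvY pvT (hB3.of_le (by norm_num))
  have swYXB0 : pDv pvY (pDv pvX (pB u)) = pDv pvX (pDv pvY (pB u)) := pDv_swap pvY pvX (hB3.of_le (by norm_num))
  have swXTAT : pDv pvX (pDv pvT (pDv pvT (pA u))) = pDv pvT (pDv pvX (pDv pvT (pA u))) := pDv_swap pvX pvT (hA2 pvT)
  have swYTAT : pDv pvY (pDv pvT (pDv pvT (pA u))) = pDv pvT (pDv pvY (pDv pvT (pA u))) := pDv_swap pvY pvT (hA2 pvT)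
  have swYXAT : pDv pvY (pDv pvX (pDv pvT (pA u))) = pDv pvX (pDv pvY (pDv pvT (pA u))) := pDv_swap pvY pvX (hA2 pvT)
  have swXTAX : pDv pvX (pDv pvT (pDv pvX (pA u))) = pDv pvT (pDv pvX (pDv pvX (pA u))) := pDv_swap pvX pvT (hA2 pvX)
  have swYTAX : pDv pvY (pDv pvT (pDv pvX (pA u))) = pDv pvT (pDv pvY (pDv pvX (pA u))) := pDv_swap pvY pvT (hA2 pvX)
  have swYXAX : pDv pvY (pDv pvX (pDv pvX (pA u))) = pDv pvX (pDv pvY (pDv pvX (pA u))) := pDv_swap pvY pvX (hA2 pvX)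
  have swXTAY : pDv pvX (pDv pvT (pDv pvY (pA u))) = pDv pvT (pDv pvX (pDv pvY (pA u))) := pDv_swap pvX pvT (hA2 pvY)
  have swYTAY : pDv pvY (pDv pvT (pDv pvY (pA u))) = pDv pvT (pDv pvY (pDv pvY (pA u))) := pDv_swap pvY pvT (hA2 pvY)
  have swYXAY : pDv pvY (pDv pvX (pDv pvY (pA u))) = pDv pvX (pDv pvY (pDv pvY (pA u))) := pDv_swap pvY pvX (hA2 pvY)
  have swXTBT : pDv pvX (pDv pvT (pDv pvT (pB u))) = pDv pvT (pDv pvX (pDv pvT (pB u))) := pDv_swap pvX pvT (hB2 pvT)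
  have swYTBT : pDv pvY (pDv pvT (pDv pvT (pB u))) = pDv pvT (pDv pvY (pDv pvT (pB u))) := pDv_swap pvY pvT (hB2 pvT)
  have swYXBT : pDv pvY (pDv pvX (pDv pvT (pB u))) = pDv pvX (pDv pvY (pDv pvT (pB u))) := pDv_swap pvY pvX (hB2 pvT)
  have swXTBX : pDv pvX (pDv pvT (pDv pvX (pB u))) = pDv pvT (pDv pvX (pDv pvX (pB u))) := pDv_swap pvX pvT (hB2 pvX)
  have swYTBX : pDv pvY (pDv pvT (pDv pvX (pB u))) = pDv pvT (pDv pvY (pDv pvX (pB u))) := pDv_swap pvY pvT (hB2 pvX)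
  have swYXBX : pDv pvY (pDv pvX (pDv pvX (pB u))) = pDv pvX (pDv pvY (pDv pvX (pB u))) := pDv_swap pvY pvX (hB2 pvX)
  have swXTBY : pDv pvX (pDv pvT (pDv pvY (pB u))) = pDv pvT (pDv pvX (pDv pvY (pB u))) := pDv_swap pvX pvT (hB2 pvY)
  have swYTBY : pDv pvY (pDv pvT (pDv pvY (pB u))) = pDv pvT (pDv pvY (pDv pvY (pB u))) := pDv_swap pvY pvT (hB2 pvY)
  have swYXBY : pDv pvY (pDv pvX (pDv pvY (pB u))) = pDv pvX (pDv pvY (pDv pvY (pB u))) := pDv_swap pvY pvX (hB2 pvY)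
  have hWdef : pW u = fun p => pDv pvX (pB u) p - pDv pvY (pA u) p := rfl
  have hM1def : pM1 u = fun p => pDv pvT (pA u) p + pA u p * pDv pvX (pA u) p + pB u p * pDv pvY (pA u) p := rfl
  have hM2def : pM2 u = fun p => pDv pvT (pB u) p + pA u p * pDv pvX (pB u) p + pB u p * pDv pvY (pB u) p := rfl
  simp only [curlS, mdv, vA, vB, hcurlval, hcurlpd1, hcurlpd2,
    pdt_slice dA, pdt_slice dB, pd1_slice dA, pd1_slice dB, pd2_slice dA, pd2_slice dB,
    pd1_slice dAT, pd1_slice dBT, pd2_slice dAT, pd2_slice dBT,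
    sM1, sM2, c1, c2, c3, c4, c5, c6, c7, c8, c9, c10, cC1, cC2]
  simp (disch := fun_prop) only [hWdef, hM1def, hM2def, pDv_add, pDv_sub, pDv_mul, pDv_neg,
    swXTA0, swYTA0, swYXA0, swXTB0, swYTB0, swYXB0, swXTAT, swYTAT, swYXAT, swXTAX, swYTAX, swYXAX, swXTAY, swYTAY, swYXAY, swXTBT, swYTBT, swYXBT, swXTBX, swYTBX, swYXBX, swXTBY, swYTBY, swYXBY]
  constructor <;> ring
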